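/- Safe pruning for regressors. Let R = ⟨D_1, …, D_r⟩ be a gradient boosted regressor over ℝ^m and let Φ be any predicate on the assignment variables (x, wl_1, …, wl_r, out). Then the conjunction Υ(R) ∧ Φ is satisfiable (i.e., holds for some assignment of x ∈ ℝ^m, wl_1, …, wl_r, out ∈ ℝ) if and only if the conjunction Υ^Φ(R) ∧ Φ is satisfiable. -/

import Mathlib

/-- A decision tree over `ℝ^m`: every internal node carries a Boolean condition on
inputs, every leaf carries a real weight. -/
inductive DTree (m : ℕ) : Type where
  | leaf (w : ℝ) : DTree m
  | node (cond : (Fin m → ℝ) → Bool) (pos neg : DTree m) : DTree m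

namespace DTree

variable {m : ℕ}

/-- Valuation `D̂(x)`: traverse from the root, going to the positive child when the
condition holds and to the negative child otherwise; return the weight of the leaf reached. -/
def eval : DTree m → (Fin m → ℝ) → ℝ
  | leaf w, _ => w
  | node c p n, x => if c x then p.eval x else n.eval x

/-- The root-to-leaf path (as a list of branch choices, `true` = positive child)
followed by the valuation traversal of `D` on input `x`. -/
def traverse : DTree m → (Fin m → ℝ) → List Bool
  | leaf _, _ => []
  | node c p n, x => if c x then true :: p.traverse x else false :: n.traverse x

/-- `leafWeight D l = some w` iff `l` is a root-to-leaf path of `D` whose leaf has weight `w`. -/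
def leafWeight : DTree m → List Bool → Option ℝ
  | leaf w, [] => some w
  | node _ p _, true :: l => p.leafWeight l
  | node _ _ n, false :: l => n.leafWeight l
  | _, _ => none

/-- `l` identifies a leaf of `D`. -/
def IsLeaf (D : DTree m) (l : List Bool) : Prop := (D.leafWeight l).isSome

/-- All conditions along the root-to-leaf path `l` hold at `x` in the polarity of the
branch taken (true for positive branches, false for negative ones). -/
def pathHolds : DTree m → List Bool → (Fin m → ℝ) → Prop
  | leaf _, [], _ => True
  | node c p _, true :: l, x => c x = true ∧ p.pathHolds l x
  | node c _ n, false :: l, x => c x = false ∧ n.pathHolds l x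
  | _, _, _ => False

/-- Leaf encoding `π(l)` at `(x, wl)`: `wl` is the weight of the leaf `l` and every
condition on the path from the root to `l` holds at `x` in the polarity of the branch taken. -/
def leafEnc (D : DTree m) (l : List Bool) (x : Fin m → ℝ) (wl : ℝ) : Prop :=
  D.leafWeight l = some wl ∧ D.pathHolds l x

/-- Tree encoding `Π(D)` at `(x, wl)`: the disjunction of `π(l)` over all leaves `l` of `D`. -/
def treeEnc (D : DTree m) (x : Fin m → ℝ) (wl : ℝ) : Prop :=
  ∃ l : List Bool, D.leafEnc l x wl

end DTree

/-- Regressor encoding `Υ(R)` at the assignment `(x, wl_1, …, wl_r, out)`: every tree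
encoding `Π(D_i)` (a disjunction of leaf encodings `π(l)`) holds at `(x, wl_i)`, and
`out = Σᵢ wl_i`. -/
def regEnc {m r : ℕ} (R : Fin r → DTree m) (x : Fin m → ℝ) (wl : Fin r → ℝ)
    (out : ℝ) : Prop :=
  (∀ i : Fin r, ∃ l : List Bool, (R i).leafEnc l x (wl i)) ∧ out = ∑ i : Fin r, wl i

/-- The conjunction of the leaf encoding `π(l)` of leaf `l` of tree `D_i` (at `(x, wl_i)`)
with `Φ` is satisfiable by some assignment `(x, wl_1, …, wl_r, out)`. -/
def leafSat {m r : ℕ} (R : Fin r → DTree m)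
    (Φ : (Fin m → ℝ) → (Fin r → ℝ) → ℝ → Prop) (i : Fin r) (l : List Bool) : Prop :=
  ∃ (x : Fin m → ℝ) (wl : Fin r → ℝ) (out : ℝ), (R i).leafEnc l x (wl i) ∧ Φ x wl out

/-- The `Φ`-pruned leaf encoding `π^Φ(l)` of leaf `l` of tree `D_i`: it equals `π(l)` when
`π(l) ∧ Φ` is satisfiable, and the constant `False` otherwise. -/
def prunedLeafEnc {m r : ℕ} (R : Fin r → DTree m)
    (Φ : (Fin m → ℝ) → (Fin r → ℝ) → ℝ → Prop) (i : Fin r) (l : List Bool)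
    (x : Fin m → ℝ) (w : ℝ) : Prop :=
  leafSat R Φ i l ∧ (R i).leafEnc l x w

/-- The `Φ`-pruned regressor encoding `Υ^Φ(R)`: `Υ(R)` with every occurrence of a leaf
encoding `π(l)` replaced by its pruned version `π^Φ(l)`. -/
def prunedRegEnc {m r : ℕ} (R : Fin r → DTree m)
    (Φ : (Fin m → ℝ) → (Fin r → ℝ) → ℝ → Prop) (x : Fin m → ℝ) (wl : Fin r → ℝ)
    (out : ℝ) : Prop :=
  (∀ i : Fin r, ∃ l : List Bool, prunedLeafEnc R Φ i l x (wl i)) ∧ out = ∑ i : Fin r, wl i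

/-! A leaf that is active at an assignment satisfying `Φ` witnesses by itself the satisfiability
of `π(l) ∧ Φ`, so pruning never removes a leaf used by a model of `Υ(R) ∧ Φ`: at every such
assignment the pruned and the unpruned encodings agree. -/

section

variable {m r : ℕ} {R : Fin r → DTree m} {Φ : (Fin m → ℝ) → (Fin r → ℝ) → ℝ → Prop}
  {x : Fin m → ℝ} {wl : Fin r → ℝ} {out : ℝ}

theorem prunedLeafEnc_iff_leafEnc (hΦ : Φ x wl out) (i : Fin r) (l : List Bool) :
    prunedLeafEnc R Φ i l x (wl i) ↔ (R i).leafEnc l x (wl i) :=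
  ⟨And.right, fun hl => ⟨⟨x, wl, out, hl, hΦ⟩, hl⟩⟩

theorem prunedRegEnc_iff_regEnc (hΦ : Φ x wl out) :
    prunedRegEnc R Φ x wl out ↔ regEnc R x wl out := by
  simp only [prunedRegEnc, regEnc, prunedLeafEnc_iff_leafEnc hΦ]

end

/-- **Safe pruning for regressors.** `Υ(R) ∧ Φ` is satisfiable if and only if
`Υ^Φ(R) ∧ Φ` is satisfiable. -/
theorem safe_pruning_regressor {m r : ℕ} (R : Fin r → DTree m)
    (Φ : (Fin m → ℝ) → (Fin r → ℝ) → ℝ → Prop) :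
    (∃ (x : Fin m → ℝ) (wl : Fin r → ℝ) (out : ℝ), regEnc R x wl out ∧ Φ x wl out) ↔
    (∃ (x : Fin m → ℝ) (wl : Fin r → ℝ) (out : ℝ), prunedRegEnc R Φ x wl out ∧ Φ x wl out) := by
  refine exists_congr fun x => exists_congr fun wl => exists_congr fun out => ?_
  exact and_congr_left fun hΦ => (prunedRegEnc_iff_regEnc hΦ).symm
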